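/- arXiv:1407.4514 — 4 statements merged into one kernel-verified Lean document; each statement's English description precedes it below -/
import Mathlib

section
/- Fix q ≥ 4 and define C(n) = T_{|n|}(√q/2), D(n) = √q·U_{n-1}(√q/2) for n ≥ 1, with C even and D odd in n, D(0)=0. Then for all integers j, k, ℓ: C(j+k)·D(k+ℓ) = C(k)·D(j+k+ℓ) − C(ℓ)·D(j). -/
open Polynomial Polynomial.Chebyshev

/-- `C n = T_{|n|}(√q/2)`; Mathlib's `T` is even in its integer index. -/
noncomputable def C (q : ℝ) (n : ℤ) : ℝ := (T ℝ n).eval (Real.sqrt q / 2)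

/-- `D n = √q · U_{n-1}(√q/2)`, the odd extension (`D 0 = 0`). -/
noncomputable def D (q : ℝ) (n : ℤ) : ℝ := Real.sqrt q * (U ℝ (n - 1)).eval (Real.sqrt q / 2)

theorem mul_T_U (R : Type*) [CommRing R] (k m : ℤ) :
    2 * T R m * U R k = U R (m + k) + U R (k - m) := by
  induction m using Polynomial.Chebyshev.induct with
  | zero => simp [two_mul]
  | one => rw [show (1:ℤ)+k = k+1 by ring, U_add_one, T_one]; ring
  | add_two m ih1 ih2 =>
    have h₁ := U_add_two R (m + k)
    have h₂ := U_sub_two R (k - m)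
    have h₃ := T_add_two R m
    linear_combination (norm := ring_nf) 2 * U R k * h₃ - h₂ - h₁ - ih2 + 2 * (X : R[X]) * ih1
  | neg_add_one m ih1 ih2 =>
    have h₁ := U_add_two R (-m - 1 + k)
    have h₂ := U_sub_two R (k - (-m - 1))
    have h₃ := T_add_two R (-m - 1)
    linear_combination (norm := ring_nf) 2 * U R k * h₃ - h₂ - h₁ - ih2 + 2 * (X : R[X]) * ih1

theorem TU_identity (j k ℓ : ℤ) :
    2 * (T ℝ (j + k) * U ℝ (k + ℓ - 1)) =
      2 * (T ℝ k * U ℝ (j + k + ℓ - 1) - T ℝ ℓ * U ℝ (j - 1)) := by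
  have h1 := mul_T_U ℝ (k + ℓ - 1) (j + k)
  have h2 := mul_T_U ℝ (j + k + ℓ - 1) k
  have h3 := mul_T_U ℝ (j - 1) ℓ
  have h4 := U_neg_sub_one ℝ (j - ℓ)
  have e1 : k + ℓ - 1 - (j + k) = -(j - ℓ) - 1 := by ring
  have e2 : j + k + (k + ℓ - 1) = j + 2*k + ℓ - 1 := by ring
  have e3 : k + (j + k + ℓ - 1) = j + 2*k + ℓ - 1 := by ring
  have e4 : j + k + ℓ - 1 - k = j + ℓ - 1 := by ring
  have e5 : ℓ + (j - 1) = j + ℓ - 1 := by ring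
  have e6 : j - 1 - ℓ = j - ℓ - 1 := by ring
  rw [e1] at h1; rw [e2] at h1; rw [e3, e4] at h2; rw [e5, e6] at h3
  linear_combination h1 - h2 + h3 + h4

theorem CD_identity (q : ℝ) (hq : 4 ≤ q) (j k ℓ : ℤ) :
    C q (j + k) * D q (k + ℓ) = C q k * D q (j + k + ℓ) - C q ℓ * D q j := by
  unfold _root_.C _root_.D
  have := congrArg (fun p => Real.sqrt q * Polynomial.eval (Real.sqrt q / 2) p)
    (TU_identity j k ℓ)
  simp only [Polynomial.eval_mul, Polynomial.eval_sub, Polynomial.eval_ofNat] at this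
  linear_combination this / 2
end

section
/- With P defined as above for integer q ≥ 4: P(x) > 0 for every proper coloring x ∈ {1,…,q}^n (n ≥ 0). -/
open Polynomial Polynomial.Chebyshev

/-- A word is a proper coloring if no two consecutive letters are equal. -/
def Proper {q : ℕ} (x : List (Fin q)) : Prop := x.Chain' (· ≠ ·)

instance {q : ℕ} (x : List (Fin q)) : Decidable (Proper x) := by
  unfold Proper List.Chain'; infer_instance

/-- The recursively defined cylinder measure: `P [] = 1`, `P x = 0` for non-proper `x`,
and `P x = (1/D(n+1)) ∑_{i=1}^n C(n-2i+1) P(x̂ᵢ)` for proper `x` of length `n`,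
where `x̂ᵢ` deletes the `i`-th letter (here indexed from `0`, so the coefficient of
`x.eraseIdx i` is `C(n - 2(i+1) + 1) = C(n - 2i - 1)`). -/
noncomputable def P (q : ℕ) : List (Fin q) → ℝ
  | [] => 1
  | a :: l =>
    if Proper (a :: l) then
      (1 / D q (((a :: l).length : ℤ) + 1)) *
        ∑ i : Fin (a :: l).length,
          C q (((a :: l).length : ℤ) - 2 * (i : ℤ) - 1) * P q ((a :: l).eraseIdx i)
    else 0
termination_by x => x.length
decreasing_by
  have := i.isLt
  simp only [List.length_eraseIdx, this, if_pos]
  omega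

/-!
Since `q ≥ 4`, the evaluation point `t = √q/2` is at least `1`. Writing `t = cosh θ` gives
`T_n(t) = cosh (n θ) ≥ 1`, and the recurrence `U_{n+2} = 2t U_{n+1} - U_n` keeps `U_n(t)` increasing
from `U_0 = 1`; so every coefficient `C` and every normaliser `D` in the recursion is positive.
The recursion then writes `P x` as a positive multiple of a sum of nonnegative terms, and the term
deleting the first letter is positive by induction, because the tail of a proper word is proper.
-/

namespace Polynomial.Chebyshev

lemma one_le_T_real_eval {t : ℝ} (ht : 1 ≤ t) (n : ℤ) : 1 ≤ (T ℝ n).eval t := by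
  rw [← Real.cosh_arcosh ht, T_real_cosh]
  exact Real.one_le_cosh _

lemma one_le_U_real_eval_and_le_succ {t : ℝ} (ht : 1 ≤ t) (n : ℕ) :
    1 ≤ (U ℝ n).eval t ∧ (U ℝ n).eval t ≤ (U ℝ (n + 1)).eval t := by
  induction n with
  | zero =>
    simp only [CharP.cast_eq_zero, zero_add, U_zero, U_one, eval_one, eval_mul, eval_ofNat, eval_X]
    constructor <;> linarith
  | succ k ih =>
    have hrec : (U ℝ ((k : ℤ) + 1 + 1)).eval t
        = 2 * t * (U ℝ ((k : ℤ) + 1)).eval t - (U ℝ k).eval t := by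
      rw [add_assoc, one_add_one_eq_two, U_add_two]
      simp
    refine ⟨ih.1.trans ih.2, ?_⟩
    push_cast
    rw [hrec]
    nlinarith [ih.1, ih.2]

lemma one_le_U_real_eval {t : ℝ} (ht : 1 ≤ t) (n : ℕ) : 1 ≤ (U ℝ n).eval t :=
  (one_le_U_real_eval_and_le_succ ht n).1

end Polynomial.Chebyshev

section Coefficients

variable {q : ℝ}

lemma one_le_sqrt_div_two (hq : 4 ≤ q) : 1 ≤ Real.sqrt q / 2 := by
  have : 2 ≤ Real.sqrt q := Real.le_sqrt_of_sq_le (by linarith)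
  linarith

lemma C_pos (hq : 4 ≤ q) (n : ℤ) : 0 < C q n :=
  one_pos.trans_le (one_le_T_real_eval (one_le_sqrt_div_two hq) n)

lemma D_pos (hq : 4 ≤ q) {n : ℤ} (hn : 1 ≤ n) : 0 < D q n := by
  obtain ⟨m, rfl⟩ : ∃ m : ℕ, n = m + 1 := ⟨(n - 1).toNat, by omega⟩
  have hsqrt : 0 < Real.sqrt q := Real.sqrt_pos.2 (by linarith)
  unfold D
  rw [add_sub_cancel_right]
  exact mul_pos hsqrt (one_pos.trans_le (one_le_U_real_eval (one_le_sqrt_div_two hq) m))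

end Coefficients

lemma P_of_not_proper {q : ℕ} {x : List (Fin q)} (hx : ¬Proper x) : P q x = 0 := by
  cases x with
  | nil => exact (hx List.isChain_nil).elim
  | cons a l => rw [P, if_neg hx]

lemma P_cons_of_proper {q : ℕ} {a : Fin q} {l : List (Fin q)} (hx : Proper (a :: l)) :
    P q (a :: l) = (1 / D q (((a :: l).length : ℤ) + 1)) *
      ∑ i : Fin (a :: l).length,
        C q (((a :: l).length : ℤ) - 2 * (i : ℤ) - 1) * P q ((a :: l).eraseIdx i) := by
  rw [P, if_pos hx]

theorem P_pos (q : ℕ) (hq : 4 ≤ q) (x : List (Fin q)) (hx : Proper x) : 0 < P q x := by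
  have hq' : (4 : ℝ) ≤ q := by exact_mod_cast hq
  induction hn : x.length using Nat.strong_induction_on generalizing x with
  | _ n ih =>
  cases x with
  | nil => simp [P]
  | cons a l =>
    have hP_nonneg : ∀ y : List (Fin q), y.length < n → 0 ≤ P q y := fun y hy => by
      by_cases hy' : Proper y
      · exact (ih _ hy y hy' rfl).le
      · exact (P_of_not_proper hy').ge
    have hterm_nonneg : ∀ i : Fin (a :: l).length,
        0 ≤ C q (((a :: l).length : ℤ) - 2 * (i : ℤ) - 1) * P q ((a :: l).eraseIdx i) :=
      fun i => mul_nonneg (C_pos hq' _).le <| hP_nonneg _ <| by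
        rw [List.length_eraseIdx_of_lt i.isLt]; simp only [List.length_cons] at hn ⊢; omega
    have htail_pos : 0 < P q l := ih l.length (by simp only [List.length_cons] at hn; omega) l hx.tail rfl
    rw [P_cons_of_proper hx]
    refine mul_pos (one_div_pos.2 (D_pos hq' (by omega))) ?_
    exact Finset.sum_pos' (fun i _ => hterm_nonneg i)
      ⟨⟨0, by simp⟩, Finset.mem_univ _, mul_pos (C_pos hq' _) htail_pos⟩
end

section
/- For every integer q ≥ 4 and all words x ∈ {1,…,q}^m, y ∈ {1,…,q}^n (m, n ≥ 0), ∑_{a=1}^q P(xay) = P(x)·P(y), where xay is the concatenation of x, the letter a, and y. (This is the 1-dependence property of P.) -/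
open Polynomial Polynomial.Chebyshev

/-!
Write `R_F(w) = ∑ᵢ F(n - 2i - 1) P(ŵᵢ)` (`deletionSum`), so that the recursion reads
`D(n + 1) P(w) = R_C(w)` for proper nonempty `w`. The key auxiliary fact is `R_D(w) = 0` for proper
`w`: multiplying by `D(n)` and applying the recursion to each `ŵᵥ` turns `D(n) R_D(w)` into
`∑_{v,j} D(2j - 2v + 1) P(ŵ_{v,j})`, in which every pair of deleted positions occurs twice with
opposite signs because `D` is odd. Together with `C(s + t) = C(s) C(t) + (q - 4)/(4q) D(s) D(t)`
this gives `R_{C(· + t)}(w) = C(t) R_C(w)`.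

Now apply the recursion to `x a y` and sum over `a`, by induction on `|x| + |y|`. Deletions inside
`x` and `y` contribute `C(|y| + 1) R_C(x) P(y)` and `C(|x| + 1) P(x) R_C(y)`, deleting `a`
contributes `q C(|y| - |x|) P(xy)`, and the letters `a` for which `x a y` is not proper are
corrected by `√q C(|y| - |x| ± 1) P(xy)`. The addition formula for `D` and
`C(k + 1) + C(k - 1) = √q C(k)` collapse the total to `D(|x| + |y| + 2) P(x) P(y)`.
-/

open Finset

namespace FinitelyDependent

section Chebyshev

variable {q : ℝ}

theorem C_zero : C q 0 = 1 := by simp [_root_.C]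

theorem C_one : C q 1 = √q / 2 := by simp [_root_.C]

theorem D_zero : D q 0 = 0 := by simp [D]

theorem D_one : D q 1 = √q := by simp [D]

theorem C_neg (n : ℤ) : C q (-n) = C q n := by simp [_root_.C]

theorem D_neg (n : ℤ) : D q (-n) = -D q n := by
  rw [D, D, U_neg_sub_one, eval_neg, mul_neg]

theorem C_add_two (n : ℤ) : C q (n + 2) = √q * C q (n + 1) - C q n := by
  simp only [_root_.C, T_add_two, eval_sub, eval_mul, eval_X, eval_ofNat]
  ring

theorem D_add_two (n : ℤ) : D q (n + 2) = √q * D q (n + 1) - D q n := by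
  simp only [D, show n + 2 - 1 = n - 1 + 2 by ring, U_add_two, eval_sub, eval_mul, eval_X,
    eval_ofNat, add_sub_cancel_right, sub_add_cancel]
  ring

theorem eq_of_recurrence {R : Type*} [CommRing R] {s : R} {f g : ℤ → R}
    (hf : ∀ n, f (n + 2) = s * f (n + 1) - f n) (hg : ∀ n, g (n + 2) = s * g (n + 1) - g n)
    (h0 : f 0 = g 0) (h1 : f 1 = g 1) : f = g := by
  funext n
  induction n using Polynomial.Chebyshev.induct with
  | zero => exact h0
  | one => exact h1
  | add_two n ih1 ih2 => rw [hf, hg, ih1, ih2]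
  | neg_add_one n ih1 ih2 =>
    have hf' := hf (-n - 1)
    have hg' := hg (-n - 1)
    rw [show -(n : ℤ) - 1 + 2 = -n + 1 by ring, show -(n : ℤ) - 1 + 1 = -n by ring] at hf' hg'
    linear_combination hf' - hg' - ih2 + s * ih1

theorem D_add (m n : ℤ) : D q (m + n) = D q m * C q n + C q m * D q n := by
  refine congrFun (eq_of_recurrence (s := √q) (f := fun n => D q (m + n))
    (g := fun n => D q m * C q n + C q m * D q n) (fun n => ?_) (fun n => ?_) ?_ ?_) n
  · simp only [← add_assoc, D_add_two]
  · simp only [C_add_two, D_add_two]; ring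
  · simp [C_zero, D_zero]
  · have h := U_eq_X_mul_U_add_T ℝ (m - 1)
    rw [sub_add_cancel] at h
    show D q (m + 1) = D q m * C q 1 + C q m * D q 1
    rw [C_one, D_one]
    simp only [D, _root_.C, add_sub_cancel_right, h, eval_add, eval_mul, eval_X]
    ring

theorem D_sub (m n : ℤ) : D q (m - n) = D q m * C q n - C q m * D q n := by
  rw [sub_eq_add_neg, D_add, C_neg, D_neg, mul_neg, ← sub_eq_add_neg]

/-- At `X = √q / 2` this is `T (m + n) = T m * T n + (X ^ 2 - 1) * U (m - 1) * U (n - 1)`. -/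
theorem C_add (hq : 0 < q) (m n : ℤ) :
    C q (m + n) = C q m * C q n + (q - 4) / (4 * q) * (D q m * D q n) := by
  refine congrFun (eq_of_recurrence (s := √q) (f := fun n => C q (m + n))
    (g := fun n => C q m * C q n + (q - 4) / (4 * q) * (D q m * D q n))
    (fun n => ?_) (fun n => ?_) ?_ ?_) n
  · simp only [← add_assoc, C_add_two]
  · simp only [C_add_two, D_add_two]; ring
  · simp [C_zero, D_zero]
  · have h := T_eq_X_mul_T_sub_pol_U ℝ (m - 1)
    rw [show m - 1 + 2 = m + 1 by ring, sub_add_cancel] at h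
    show C q (m + 1) = C q m * C q 1 + (q - 4) / (4 * q) * (D q m * D q 1)
    rw [C_one, D_one]
    simp only [D, _root_.C, h, eval_sub, eval_mul, eval_X, eval_one, eval_pow]
    field_simp
    linear_combination 16 * eval (√q / 2) (U ℝ (m - 1)) * Real.sq_sqrt hq.le

theorem C_add_one_add_C_sub_one (n : ℤ) : C q (n + 1) + C q (n - 1) = √q * C q n := by
  have h := C_add_two (q := q) (n - 1)
  rw [show n - 1 + 2 = n + 1 by ring, sub_add_cancel] at h
  linear_combination h

theorem D_add_one_add_D_sub_one (n : ℤ) : D q (n + 1) + D q (n - 1) = √q * D q n := by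
  have h := D_add_two (q := q) (n - 1)
  rw [show n - 1 + 2 = n + 1 by ring, sub_add_cancel] at h
  linear_combination h

theorem D_pos (hq : 4 ≤ q) {n : ℤ} (hn : 0 < n) : 0 < D q n := by
  have hs : 2 ≤ √q := Real.le_sqrt_of_sq_le (by linarith)
  have mono : ∀ k : ℕ, 0 ≤ D q k ∧ D q k < D q (k + 1) := by
    intro k
    induction k with
    | zero => simp [D_zero, D_one]; linarith
    | succ k ih =>
      have h := D_add_two (q := q) k
      push_cast
      rw [show (k : ℤ) + 1 + 1 = k + 2 by ring, h]
      constructor <;> nlinarith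
  lift n to ℕ using hn.le
  obtain ⟨k, rfl⟩ := Nat.exists_eq_add_one.mpr (by exact_mod_cast hn)
  push_cast
  exact (mono k).1.trans_lt (mono k).2

end Chebyshev

theorem eraseIdx_eraseIdx_of_le {α : Type*} (l : List α) {i j : ℕ} (h : i ≤ j) :
    (l.eraseIdx i).eraseIdx j = (l.eraseIdx (j + 1)).eraseIdx i := by
  induction l generalizing i j with
  | nil => rfl
  | cons a l ih =>
    cases i with
    | zero => cases l <;> simp
    | succ i =>
      obtain ⟨j, rfl⟩ := Nat.exists_eq_add_one.mpr (Nat.lt_of_lt_of_le i.succ_pos h)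
      simp [ih (Nat.le_of_succ_le_succ h)]

theorem eraseIdx_length_append_cons {α : Type*} (u w : List α) (z : α) :
    (u ++ z :: w).eraseIdx u.length = u ++ w := by
  rw [List.eraseIdx_append_of_length_le le_rfl, Nat.sub_self, List.eraseIdx_cons_zero]

/-- Deleting position `v` and then position `j ≥ v` deletes the pair `{v, j + 1}`, and deleting
`j < v` after `v` deletes `{j, v}`: each pair occurs twice, with opposite signs. -/
theorem sum_sum_eraseIdx_eraseIdx_eq_zero {α R : Type*} [Ring R] {F : ℤ → R}
    (hF : ∀ z, F (-z) = -F z) (G : List α → R) (l : List α) :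
    ∑ v ∈ range l.length, ∑ j ∈ range (l.length - 1),
      F (2 * j - 2 * v + 1) * G ((l.eraseIdx v).eraseIdx j) = 0 := by
  rw [← sum_product']
  refine sum_involution (fun p _ => if p.1 ≤ p.2 then (p.2 + 1, p.1) else (p.2, p.1 - 1))
    (fun ⟨v, j⟩ _ => ?_) (fun ⟨v, j⟩ _ _ => ?_) (fun ⟨v, j⟩ hp => ?_) (fun ⟨v, j⟩ _ => ?_)
  · dsimp only
    split_ifs with h
    · rw [← eraseIdx_eraseIdx_of_le l h,
        show 2 * ((v : ℕ) : ℤ) - 2 * ((j + 1 : ℕ) : ℤ) + 1 = -(2 * j - 2 * v + 1) by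
          push_cast; ring,
        hF, neg_mul, add_neg_cancel]
    · rw [eraseIdx_eraseIdx_of_le l (by omega : j ≤ v - 1), Nat.sub_add_cancel (by omega),
        show 2 * ((v - 1 : ℕ) : ℤ) - 2 * (j : ℤ) + 1 = -(2 * j - 2 * v + 1) by omega,
        hF, neg_mul, add_neg_cancel]
  · dsimp only
    split_ifs <;> simp [Prod.ext_iff] <;> omega
  · simp only [mem_product, mem_range] at hp ⊢
    split_ifs <;> omega
  · dsimp only
    split_ifs <;> simp [Prod.ext_iff] <;> omega

variable {q : ℕ}

theorem proper_iff_isChain {w : List (Fin q)} : Proper w ↔ w.IsChain (· ≠ ·) := Iff.rfl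

theorem proper_append_cons_iff {x y : List (Fin q)} {a : Fin q} :
    Proper (x ++ a :: y) ↔ Proper x ∧ Proper y ∧ x.getLast? ≠ some a ∧ y.head? ≠ some a := by
  simp only [proper_iff_isChain, List.isChain_append, List.isChain_cons]
  cases x.getLast? <;> cases y.head? <;> simp [eq_comm] <;> tauto

theorem not_proper_append_cons_cons (u v : List (Fin q)) (b : Fin q) :
    ¬Proper (u ++ b :: b :: v) := by
  simp [proper_iff_isChain]

theorem P_nil : P q [] = 1 := by rw [P]

theorem P_eq_zero_of_not_proper {w : List (Fin q)} (hw : ¬Proper w) : P q w = 0 := by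
  cases w with
  | nil => exact absurd List.isChain_nil hw
  | cons a l => rw [P, if_neg hw]

noncomputable def deletionSum (q : ℕ) (F : ℤ → ℝ) (w : List (Fin q)) : ℝ :=
  ∑ i ∈ range w.length, F (w.length - 2 * i - 1) * P q (w.eraseIdx i)

theorem deletionSum_C_of_proper (hq : 4 ≤ q) {w : List (Fin q)} (hw : Proper w) :
    deletionSum q (C q) w = D q (w.length + 1) * P q w - if w = [] then √q else 0 := by
  cases w with
  | nil => simp [deletionSum, P_nil, D_one]
  | cons a l =>
    have hD : D q ((a :: l).length + 1) ≠ 0 :=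
      (D_pos (by exact_mod_cast hq) (by positivity)).ne'
    rw [P, if_pos hw, if_neg (List.cons_ne_nil a l), sub_zero, ← mul_assoc, mul_one_div_cancel hD,
      one_mul, deletionSum]
    exact (Fin.sum_univ_eq_sum_range
      (fun i => C q ((a :: l).length - 2 * (i : ℤ) - 1) * P q ((a :: l).eraseIdx i)) _).symm

theorem deletionSum_append_cons (F : ℤ → ℝ) (x y : List (Fin q)) (a : Fin q) :
    deletionSum q F (x ++ a :: y) =
      ∑ i ∈ range x.length, F (x.length + y.length - 2 * i) * P q (x.eraseIdx i ++ a :: y) +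
        F (y.length - x.length) * P q (x ++ y) +
        ∑ j ∈ range y.length,
          F (y.length - x.length - 2 * j - 2) * P q (x ++ a :: y.eraseIdx j) := by
  rw [deletionSum, List.length_append, List.length_cons, sum_range_add, sum_range_succ', add_assoc,
    add_comm (∑ j ∈ range y.length, _)]
  congr 1
  · refine sum_congr rfl fun i hi => ?_
    rw [List.eraseIdx_append_of_lt_length (mem_range.mp hi)]
    push_cast
    ring_nf
  congr 1
  · rw [add_zero, eraseIdx_length_append_cons]
    push_cast
    ring_nf
  · refine sum_congr rfl fun j _ => ?_
    rw [List.eraseIdx_append_of_length_le (by omega),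
      show x.length + (j + 1) - x.length = j + 1 by omega, List.eraseIdx_cons_succ]
    push_cast
    ring_nf

theorem deletionSum_append_cons_cons (F : ℤ → ℝ) (u v : List (Fin q)) (b : Fin q) :
    deletionSum q F (u ++ b :: b :: v) =
      (F (v.length - u.length + 1) + F (v.length - u.length - 1)) * P q (u ++ b :: v) := by
  rw [deletionSum_append_cons, List.length_cons, sum_range_succ', List.eraseIdx_cons_zero]
  simp only [List.eraseIdx_cons_succ, P_eq_zero_of_not_proper (not_proper_append_cons_cons _ _ _),
    mul_zero, sum_const_zero, zero_add]
  push_cast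
  ring_nf

theorem D_mul_deletionSum_C_sub_C_mul_deletionSum_D (hq : 4 ≤ q) {u w : List (Fin q)} {z : Fin q}
    (hx : Proper (u ++ z :: w)) (ih : Proper (u ++ w) → deletionSum q (D q) (u ++ w) = 0) :
    D q (w.length - u.length) * deletionSum q (C q) (u ++ w) -
        C q (w.length - u.length) * deletionSum q (D q) (u ++ w) =
      D q (w.length - u.length) * (D q (u.length + w.length + 1) * P q (u ++ w)) := by
  by_cases h : Proper (u ++ w)
  · rw [deletionSum_C_of_proper hq h, ih h, List.length_append]
    split_ifs with h0
    · obtain ⟨rfl, rfl⟩ := List.append_eq_nil_iff.mp h0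
      simp [D_zero]
    · push_cast
      ring
  · obtain ⟨hu, hw, -, -⟩ := proper_append_cons_iff.mp hx
    have hbc : ¬∀ b ∈ u.getLast?, ∀ c ∈ w.head?, b ≠ c := fun hbc =>
      h (List.isChain_append.mpr ⟨hu, hw, hbc⟩)
    push Not at hbc
    obtain ⟨b, hb, _, hb', rfl⟩ := hbc
    obtain ⟨u, rfl⟩ := List.getLast?_eq_some_iff.mp hb
    obtain ⟨w, rfl⟩ := List.head?_eq_some_iff.mp hb'
    have hc : ((b :: w).length : ℤ) - (u ++ [b]).length = w.length - u.length := by simp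
    rw [List.append_assoc, List.singleton_append, hc, deletionSum_append_cons_cons,
      deletionSum_append_cons_cons, C_add_one_add_C_sub_one, D_add_one_add_D_sub_one,
      P_eq_zero_of_not_proper (not_proper_append_cons_cons _ _ _)]
    ring

theorem deletionSum_D_of_proper (hq : 4 ≤ q) {x : List (Fin q)} (hx : Proper x) :
    deletionSum q (D q) x = 0 := by
  induction hn : x.length using Nat.strong_induction_on generalizing x with
  | _ n ih =>
  subst hn
  rcases Nat.eq_zero_or_pos x.length with h0 | hpos
  · simp [deletionSum, h0]
  have hD : D q x.length ≠ 0 := (D_pos (by exact_mod_cast hq) (by exact_mod_cast hpos)).ne'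
  refine (mul_eq_zero.mp ?_).resolve_left hD
  calc D q x.length * deletionSum q (D q) x
      = ∑ v ∈ range x.length,
          (D q (x.length - 2 * v - 1) * deletionSum q (C q) (x.eraseIdx v) -
            C q (x.length - 2 * v - 1) * deletionSum q (D q) (x.eraseIdx v)) := by
        rw [deletionSum, mul_sum]
        refine sum_congr rfl fun v hv => ?_
        obtain ⟨u, z, w, hx', rfl, -⟩ := List.exists_of_modify id (mem_range.mp hv)
        have hlen : x.length = u.length + w.length + 1 := by simp [hx']; ring
        have hc : (x.length : ℤ) - 2 * u.length - 1 = w.length - u.length := by omega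
        rw [hx', eraseIdx_length_append_cons, ← hx', hc,
          D_mul_deletionSum_C_sub_C_mul_deletionSum_D hq (hx' ▸ hx)
            (fun h => ih _ (by simp [hlen]) h rfl), hlen]
        push_cast
        ring
    _ = ∑ v ∈ range x.length, ∑ j ∈ range (x.length - 1),
          D q (2 * j - 2 * v + 1) * P q ((x.eraseIdx v).eraseIdx j) := by
        refine sum_congr rfl fun v hv => ?_
        have hlen : (x.eraseIdx v).length = x.length - 1 :=
          List.length_eraseIdx_of_lt (mem_range.mp hv)
        rw [deletionSum, deletionSum, hlen, mul_sum, mul_sum, ← sum_sub_distrib]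
        refine sum_congr rfl fun j _ => ?_
        rw [show (2 * j - 2 * v + 1 : ℤ) =
            (x.length - 2 * v - 1) - (((x.length - 1 : ℕ) : ℤ) - 2 * j - 1) by omega,
          D_sub ((x.length : ℤ) - 2 * v - 1)]
        ring
    _ = 0 := sum_sum_eraseIdx_eraseIdx_eq_zero D_neg (P q) x

theorem deletionSum_C_add (hq : 4 ≤ q) {w : List (Fin q)} (hw : Proper w) (t : ℤ) :
    deletionSum q (fun c => C q (c + t)) w = C q t * deletionSum q (C q) w := by
  have hq' : (0 : ℝ) < q := by exact_mod_cast (by omega : 0 < q)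
  calc deletionSum q (fun c => C q (c + t)) w
      = C q t * deletionSum q (C q) w + (q - 4) / (4 * q) * D q t * deletionSum q (D q) w := by
        simp only [deletionSum, mul_sum, ← sum_add_distrib, C_add hq']
        exact sum_congr rfl fun i _ => by ring
    _ = C q t * deletionSum q (C q) w := by rw [deletionSum_D_of_proper hq hw]; ring

theorem sum_ite_getLast?_eq_some {α M : Type*} [Fintype α] [DecidableEq α] [AddCommMonoid M]
    (l : List α) (c : M) :
    ∑ a, (if l.getLast? = some a then c else 0) = if l = [] then 0 else c := by
  rcases l.eq_nil_or_concat with rfl | ⟨l, b, rfl⟩ <;> simp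

theorem sum_ite_head?_eq_some {α M : Type*} [Fintype α] [DecidableEq α] [AddCommMonoid M]
    (l : List α) (c : M) :
    ∑ a, (if l.head? = some a then c else 0) = if l = [] then 0 else c := by
  cases l <;> simp

/-- If `a` repeats the last letter of `x` (or the first of `y`), `x ++ a :: y` is not proper and
only the two deletions of the repeated letter survive in its deletion sum. -/
theorem D_mul_P_append_cons (hq : 4 ≤ q) {x y : List (Fin q)} (hx : Proper x) (hy : Proper y)
    (a : Fin q) :
    D q (x.length + y.length + 2) * P q (x ++ a :: y) = deletionSum q (C q) (x ++ a :: y) -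
      (if x.getLast? = some a then √q * C q (y.length - x.length + 1) * P q (x ++ y) else 0) -
      (if y.head? = some a then √q * C q (y.length - x.length - 1) * P q (x ++ y) else 0) := by
  by_cases hl : x.getLast? = some a
  · obtain ⟨x, rfl⟩ := List.getLast?_eq_some_iff.mp hl
    rw [if_pos hl, List.append_assoc, List.singleton_append, deletionSum_append_cons_cons,
      C_add_one_add_C_sub_one, P_eq_zero_of_not_proper (not_proper_append_cons_cons _ _ _)]
    split_ifs with hh
    · obtain ⟨y, rfl⟩ := List.head?_eq_some_iff.mp hh
      simp [P_eq_zero_of_not_proper (not_proper_append_cons_cons _ _ _)]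
    · simp
      ring_nf
  by_cases hh : y.head? = some a
  · obtain ⟨y, rfl⟩ := List.head?_eq_some_iff.mp hh
    rw [if_neg hl, if_pos hh, deletionSum_append_cons_cons, C_add_one_add_C_sub_one,
      P_eq_zero_of_not_proper (not_proper_append_cons_cons _ _ _)]
    simp
    ring_nf
  · have hxy : Proper (x ++ a :: y) := proper_append_cons_iff.mpr ⟨hx, hy, hl, hh⟩
    rw [if_neg hl, if_neg hh, deletionSum_C_of_proper hq hxy, if_neg (by simp)]
    simp only [List.length_append, List.length_cons, sub_zero]
    push_cast
    ring_nf

theorem sum_sum_left_deletions (hq : 4 ≤ q) {x : List (Fin q)} (y : List (Fin q)) (hx : Proper x)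
    (ih : ∀ i < x.length, ∑ a, P q (x.eraseIdx i ++ a :: y) = P q (x.eraseIdx i) * P q y) :
    ∑ a, ∑ i ∈ range x.length, C q (x.length + y.length - 2 * i) * P q (x.eraseIdx i ++ a :: y) =
      C q (y.length + 1) * D q (x.length + 1) * P q x * P q y -
        if x = [] then √q * C q (y.length - x.length + 1) * P q (x ++ y) else 0 := by
  calc _ = ∑ i ∈ range x.length,
          C q (x.length - 2 * i - 1 + (y.length + 1)) * P q (x.eraseIdx i) * P q y := by
        rw [sum_comm]
        refine sum_congr rfl fun i hi => ?_
        rw [← mul_sum, ih i (mem_range.mp hi), mul_assoc]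
        ring_nf
    _ = C q (y.length + 1) * deletionSum q (C q) x * P q y := by
        rw [← deletionSum_C_add hq hx, deletionSum, sum_mul]
    _ = _ := by
        rw [deletionSum_C_of_proper hq hx]
        split_ifs with h
        · subst h
          simp [P_nil]
          ring
        · ring

theorem sum_sum_right_deletions (hq : 4 ≤ q) (x : List (Fin q)) {y : List (Fin q)} (hy : Proper y)
    (ih : ∀ j < y.length, ∑ a, P q (x ++ a :: y.eraseIdx j) = P q x * P q (y.eraseIdx j)) :
    ∑ a, ∑ j ∈ range y.length,
        C q (y.length - x.length - 2 * j - 2) * P q (x ++ a :: y.eraseIdx j) =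
      C q (x.length + 1) * D q (y.length + 1) * P q x * P q y -
        if y = [] then √q * C q (y.length - x.length - 1) * P q (x ++ y) else 0 := by
  calc _ = ∑ j ∈ range y.length,
          P q x * (C q (y.length - 2 * j - 1 + -(x.length + 1)) * P q (y.eraseIdx j)) := by
        rw [sum_comm]
        refine sum_congr rfl fun j hj => ?_
        rw [← mul_sum, ih j (mem_range.mp hj)]
        ring_nf
    _ = P q x * (C q (-(x.length + 1)) * deletionSum q (C q) y) := by
        rw [← deletionSum_C_add hq hy, deletionSum, mul_sum]
    _ = _ := by
        rw [C_neg, deletionSum_C_of_proper hq hy]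
        split_ifs with h
        · subst h
          simp [P_nil, ← C_neg (x.length + 1 : ℤ)]
          ring_nf
        · ring

theorem sum_P_append_cons (hq : 4 ≤ q) {x y : List (Fin q)} (hx : Proper x) (hy : Proper y)
    (ihx : ∀ i < x.length, ∑ a, P q (x.eraseIdx i ++ a :: y) = P q (x.eraseIdx i) * P q y)
    (ihy : ∀ j < y.length, ∑ a, P q (x ++ a :: y.eraseIdx j) = P q x * P q (y.eraseIdx j)) :
    ∑ a, P q (x ++ a :: y) = P q x * P q y := by
  have hD : D q (x.length + y.length + 2) ≠ 0 :=
    (D_pos (by exact_mod_cast hq) (by positivity)).ne'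
  have hN : D q (x.length + y.length + 2) =
      D q (x.length + 1) * C q (y.length + 1) + C q (x.length + 1) * D q (y.length + 1) := by
    rw [← D_add]
    ring_nf
  have hk := C_add_one_add_C_sub_one (q := q) (y.length - x.length)
  have hs : √q * √q = q := Real.mul_self_sqrt (Nat.cast_nonneg q)
  refine mul_left_cancel₀ hD ?_
  simp only [mul_sum, D_mul_P_append_cons hq hx hy, deletionSum_append_cons, sum_sub_distrib,
    sum_add_distrib, sum_ite_getLast?_eq_some, sum_ite_head?_eq_some,
    sum_sum_left_deletions hq y hx ihx, sum_sum_right_deletions hq x hy ihy, sum_const, card_univ,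
    Fintype.card_fin, nsmul_eq_mul]
  split_ifs <;>
    linear_combination -(P q x * P q y) * hN - P q (x ++ y) * √q * hk -
      P q (x ++ y) * C q (y.length - x.length) * hs

end FinitelyDependent

theorem P_one_dependent (q : ℕ) (hq : 4 ≤ q) (x y : List (Fin q)) :
    ∑ a : Fin q, P q (x ++ a :: y) = P q x * P q y := by
  induction hn : x.length + y.length using Nat.strong_induction_on generalizing x y with
  | _ n ih =>
  subst hn
  by_cases hx : Proper x
  · by_cases hy : Proper y
    · refine FinitelyDependent.sum_P_append_cons hq hx hy (fun i hi => ih _ ?_ _ _ rfl)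
        (fun j hj => ih _ ?_ _ _ rfl) <;> simp [List.length_eraseIdx_of_lt, *] <;> omega
    · simp [FinitelyDependent.P_eq_zero_of_not_proper, hy, FinitelyDependent.proper_append_cons_iff]
  · simp [FinitelyDependent.P_eq_zero_of_not_proper, hx, FinitelyDependent.proper_append_cons_iff]
end

section
/- Fix q ≥ 4 and let C, D be as above. Then for every integer n: (q−1)·C(n) = C(n−2) + C(n+1)·D(1), where D(1) = √q. -/
open Polynomial Polynomial.Chebyshev

theorem C_recurrence (q : ℝ) (hq : 4 ≤ q) (n : ℤ) :
    (q - 1) * C q n = C q (n - 2) + C q (n + 1) * D q 1 := by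
  have hq0 : (0:ℝ) ≤ q := by linarith
  have hsq : Real.sqrt q * Real.sqrt q = q := Real.mul_self_sqrt hq0
  set x := Real.sqrt q / 2 with hx
  have h1 : (T ℝ n).eval x = 2*x*(T ℝ (n-1)).eval x - (T ℝ (n-2)).eval x := by
    have h := Polynomial.Chebyshev.T_add_two ℝ (n-2)
    have h' : T ℝ n = 2 * X * T ℝ (n-1) - T ℝ (n-2) := by
      have e1 : n - 2 + 2 = n := by ring
      have e2 : n - 2 + 1 = n - 1 := by ring
      rw [e1, e2] at h; exact h
    rw [h']; simp [mul_assoc]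
  have h2 : (T ℝ (n+1)).eval x = 2*x*(T ℝ n).eval x - (T ℝ (n-1)).eval x := by
    have h := Polynomial.Chebyshev.T_add_two ℝ (n-1)
    have h' : T ℝ (n+1) = 2 * X * T ℝ n - T ℝ (n-1) := by
      have e1 : n - 1 + 2 = n + 1 := by ring
      have e2 : n - 1 + 1 = n := by ring
      rw [e1, e2] at h; exact h
    rw [h']; simp [mul_assoc]
  simp only [_root_.C, _root_.D, ← hx]
  norm_num [Polynomial.Chebyshev.U_zero]
  rw [h2]
  have hs : Real.sqrt q = 2 * x := by rw [hx]; ring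
  linear_combination (-(eval x (T ℝ n)))*hsq + (eval x (T ℝ n)*Real.sqrt q + eval x (T ℝ (n-1)))*hs - h1
end
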